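/- Let n ≥ 2, let A be an invertible n×n real matrix, b, c ∈ ℝⁿ with c₁ ≠ 0, let M̃ be the lower-right (n−1)×(n−1) block of M = (I − (1/c₁) c e₁ᵀ) A, and assume det(M̃) ≠ 0. Let μ ∈ ℝ and suppose x ∈ ℝⁿ satisfies x₁ = 0 and Ax + bμ − (e₁ᵀ(Ax + bμ)/c₁) c = 0. Then the product of the first components of the two vector fields at x satisfies χ = (e₁ᵀ(Ax + bμ)) · c₁ = (ρᵀ b) c₁ μ / det(M̃), where ρᵀ = e₁ᵀ adj(A). -/

import Mathlib

open Matrix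

/-- The matrix `M = (I − (1/c₁) c e₁ᵀ) A`. -/
noncomputable def Mmat {n : ℕ} (A : Matrix (Fin (n + 2)) (Fin (n + 2)) ℝ)
    (c : Fin (n + 2) → ℝ) : Matrix (Fin (n + 2)) (Fin (n + 2)) ℝ :=
  ((1 : Matrix (Fin (n + 2)) (Fin (n + 2)) ℝ)
      - (c 0)⁻¹ • Matrix.vecMulVec c (Pi.single 0 1)) * A

/-- `M̃`, the lower-right `(n−1)×(n−1)` block of `M`. -/
noncomputable def Mtilde {n : ℕ} (A : Matrix (Fin (n + 2)) (Fin (n + 2)) ℝ)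
    (c : Fin (n + 2) → ℝ) : Matrix (Fin (n + 1)) (Fin (n + 1)) ℝ :=
  (Mmat A c).submatrix Fin.succ Fin.succ

/-!
Write `P = I − (1/c₁) c e₁ᵀ`, so that `M = P A` and
`det M̃ = adj(M)₁₁ = (adj(A) adj(P))₁₁`. Since `P c = 0`, `P` is singular, so `P` kills every
column of `adj(P)`; the first column has first entry `det I = 1`, which forces it to be
`c / c₁`. Hence `det M̃ = ρᵀ c / c₁`. At a pseudo-equilibrium `Ax + bμ = s c` with
`s = e₁ᵀ(Ax + bμ)/c₁`; applying `ρᵀ` and using `ρᵀ A x = det(A) x₁ = 0` gives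
`s ρᵀ c = μ ρᵀ b`, and the claimed identity follows.
-/

lemma Matrix.adjugate_apply_zero_zero {R : Type*} [CommRing R] {n : ℕ}
    (M : Matrix (Fin (n + 1)) (Fin (n + 1)) R) :
    M.adjugate 0 0 = (M.submatrix Fin.succ Fin.succ).det := by
  simp [adjugate_fin_succ_eq_det_submatrix]

lemma Matrix.mulVec_adjugate_col {R : Type*} [CommRing R] {ι : Type*} [Fintype ι]
    [DecidableEq ι] (M : Matrix ι ι R) (j : ι) :
    M *ᵥ M.adjugate.col j = M.det • Pi.single j 1 := by
  rw [← mulVec_single_one, mulVec_mulVec, mul_adjugate, smul_mulVec, one_mulVec]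

lemma Matrix.adjugate_mulVec_mulVec {R : Type*} [CommRing R] {ι : Type*} [Fintype ι]
    [DecidableEq ι] (A : Matrix ι ι R) (x : ι → R) :
    A.adjugate *ᵥ (A *ᵥ x) = A.det • x := by
  rw [mulVec_mulVec, adjugate_mul, smul_mulVec, one_mulVec]

section projAlong

variable {K : Type*} [Field K] {n : ℕ}

/-- Projection onto `{w | w 0 = 0}` along `c`: the paper's `I − (1/c₁) c e₁ᵀ`, indexed
from `0`. -/
def projAlong (c : Fin (n + 1) → K) : Matrix (Fin (n + 1)) (Fin (n + 1)) K :=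
  1 - (c 0)⁻¹ • vecMulVec c (Pi.single 0 1)

lemma projAlong_mulVec (c w : Fin (n + 1) → K) :
    projAlong c *ᵥ w = w - ((c 0)⁻¹ * w 0) • c := by
  ext i
  simp [projAlong, sub_mulVec, smul_mulVec, vecMulVec_mulVec]
  ring

lemma projAlong_mulVec_self {c : Fin (n + 1) → K} (hc : c 0 ≠ 0) : projAlong c *ᵥ c = 0 := by
  rw [projAlong_mulVec, inv_mul_cancel₀ hc, one_smul, sub_self]

lemma det_projAlong {c : Fin (n + 1) → K} (hc : c 0 ≠ 0) : (projAlong c).det = 0 :=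
  exists_mulVec_eq_zero_iff.mp ⟨c, fun h ↦ hc (congrFun h 0), projAlong_mulVec_self hc⟩

lemma submatrix_succ_projAlong (c : Fin (n + 1) → K) :
    (projAlong c).submatrix Fin.succ Fin.succ = 1 := by
  ext i j
  simp [projAlong, one_apply, vecMulVec_apply, Fin.succ_ne_zero]

lemma adjugate_projAlong_apply_zero {c : Fin (n + 1) → K} (hc : c 0 ≠ 0) (k : Fin (n + 1)) :
    (projAlong c).adjugate k 0 = (c 0)⁻¹ * c k := by
  have hcol0 : (projAlong c).adjugate 0 0 = 1 := by
    rw [adjugate_apply_zero_zero, submatrix_succ_projAlong, det_one]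
  have hker := (projAlong c).mulVec_adjugate_col 0
  rw [det_projAlong hc, zero_smul, projAlong_mulVec, sub_eq_zero] at hker
  simpa [hcol0] using congrFun hker k

lemma adjugate_projAlong_mul_apply_zero_zero {c : Fin (n + 1) → K} (hc : c 0 ≠ 0)
    (A : Matrix (Fin (n + 1)) (Fin (n + 1)) K) :
    (projAlong c * A).adjugate 0 0 = (c 0)⁻¹ * (A.adjugate *ᵥ c) 0 := by
  simp only [adjugate_mul_distrib, mul_apply, adjugate_projAlong_apply_zero hc, mulVec,
    dotProduct, Finset.mul_sum]
  exact Finset.sum_congr rfl fun k _ ↦ by ring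

end projAlong

lemma det_Mtilde {n : ℕ} (A : Matrix (Fin (n + 2)) (Fin (n + 2)) ℝ) {c : Fin (n + 2) → ℝ}
    (hc : c 0 ≠ 0) : (Mtilde A c).det = (c 0)⁻¹ * (A.adjugate *ᵥ c) 0 := by
  rw [Mtilde, ← adjugate_apply_zero_zero]
  exact adjugate_projAlong_mul_apply_zero_zero hc A

theorem chi_at_pseudoEquilibrium (n : ℕ)
    (A : Matrix (Fin (n + 2)) (Fin (n + 2)) ℝ) (b c : Fin (n + 2) → ℝ)
    (hc : c 0 ≠ 0) (hM : (Mtilde A c).det ≠ 0)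
    (μ : ℝ) (x : Fin (n + 2) → ℝ) (hx1 : x 0 = 0)
    (hx : A.mulVec x + μ • b - (((A.mulVec x + μ • b) 0) / c 0) • c = 0) :
    (A.mulVec x + μ • b) 0 * c 0
      = (A.adjugate.mulVec b) 0 * c 0 * μ / (Mtilde A c).det := by
  set y := A *ᵥ x + μ • b
  set s := y 0 / c 0
  have hy : y = s • c := sub_eq_zero.mp hx
  have hρ : s * (A.adjugate *ᵥ c) 0 = μ * (A.adjugate *ᵥ b) 0 := by
    have h := congrFun (congrArg (A.adjugate *ᵥ ·) hy) 0
    rw [mulVec_add, adjugate_mulVec_mulVec, mulVec_smul, mulVec_smul] at h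
    simpa [hx1] using h.symm
  have hy0 : y 0 = s * c 0 := congrFun hy 0
  rw [det_Mtilde A hc] at hM ⊢
  rw [eq_div_iff hM, hy0]
  linear_combination c 0 * hρ + s * c 0 * (A.adjugate *ᵥ c) 0 * mul_inv_cancel₀ hc
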